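/- The polynomial p(z) = (1/5)(z_1²+z_2²+z_3²-2z_1z_2-2z_1z_3-2z_2z_3) cannot be realized as the transfer function of any dissipative 3D scattering system with scalar input and output spaces. -/

import Mathlib

/-- The Kaijser–Varopoulos polynomial
`p(z) = (1/5)(z₁²+z₂²+z₃²-2z₁z₂-2z₁z₃-2z₂z₃)`. -/
noncomputable def pKV (z : Fin 3 → ℂ) : ℂ :=
  (1/5 : ℂ) * (z 0 ^ 2 + z 1 ^ 2 + z 2 ^ 2
    - 2 * z 0 * z 1 - 2 * z 0 * z 2 - 2 * z 1 * z 2)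

open ContinuousLinearMap in
/-- The 2×2 block operator `[[W, X],[Y, Z]]` from the Hilbert space direct sum
`H ⊕₂ K` to `H' ⊕₂ K'`. -/
noncomputable def blockOp {H K H' K' : Type*}
    [NormedAddCommGroup H] [InnerProductSpace ℂ H]
    [NormedAddCommGroup K] [InnerProductSpace ℂ K]
    [NormedAddCommGroup H'] [InnerProductSpace ℂ H']
    [NormedAddCommGroup K'] [InnerProductSpace ℂ K']
    (W : H →L[ℂ] H') (X : K →L[ℂ] H') (Y : H →L[ℂ] K') (Z : K →L[ℂ] K') :
    WithLp 2 (H × K) →L[ℂ] WithLp 2 (H' × K') :=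
  ((WithLp.prodContinuousLinearEquiv 2 ℂ H' K').symm :
      H' × K' →L[ℂ] WithLp 2 (H' × K')) ∘L
    (((W ∘L fst ℂ H K) + (X ∘L snd ℂ H K)).prod
      ((Y ∘L fst ℂ H K) + (Z ∘L snd ℂ H K))) ∘L
    ((WithLp.prodContinuousLinearEquiv 2 ℂ H K) : WithLp 2 (H × K) →L[ℂ] H × K)

section Aux

variable {H K H' K' : Type*}
    [NormedAddCommGroup H] [InnerProductSpace ℂ H]
    [NormedAddCommGroup K] [InnerProductSpace ℂ K]
    [NormedAddCommGroup H'] [InnerProductSpace ℂ H']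
    [NormedAddCommGroup K'] [InnerProductSpace ℂ K']

lemma blockOp_bound (W : H →L[ℂ] H') (X : K →L[ℂ] H') (Y : H →L[ℂ] K') (Z : K →L[ℂ] K')
    (h : ‖blockOp W X Y Z‖ ≤ 1) (x : H) (c : K) :
    ‖W x + X c‖ ^ 2 + ‖Y x + Z c‖ ^ 2 ≤ ‖x‖ ^ 2 + ‖c‖ ^ 2 := by
  set u : WithLp 2 (H × K) := (WithLp.equiv 2 (H × K)).symm (x, c) with hu
  have h1 : ‖blockOp W X Y Z u‖ ≤ ‖u‖ := by
    calc ‖blockOp W X Y Z u‖ ≤ ‖blockOp W X Y Z‖ * ‖u‖ := ContinuousLinearMap.le_opNorm _ _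
    _ ≤ 1 * ‖u‖ := by gcongr
    _ = ‖u‖ := one_mul _
  have hfst : (blockOp W X Y Z u).fst = W x + X c := rfl
  have hsnd : (blockOp W X Y Z u).snd = Y x + Z c := rfl
  have e1 := WithLp.prod_norm_sq_eq_of_L2 (blockOp W X Y Z u)
  have e2 := WithLp.prod_norm_sq_eq_of_L2 u
  rw [hfst, hsnd] at e1
  have hufst : u.fst = x := rfl
  have husnd : u.snd = c := rfl
  rw [hufst, husnd] at e2
  nlinarith [norm_nonneg (blockOp W X Y Z u), norm_nonneg u]

open Filter Topology in
lemma coeff_extract {𝒳 : Type*} [NormedAddCommGroup 𝒳] [NormedSpace ℂ 𝒳] [CompleteSpace 𝒳]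
    (A' : 𝒳 →L[ℂ] 𝒳) (B' : ℂ →L[ℂ] 𝒳) (C' : 𝒳 →L[ℂ] ℂ) (q : ℂ) (d : ℂ)
    (h : ∀ t : ℂ, ‖t‖ < 1 →
      t * d + t * t * (C' (Ring.inverse (1 - t • A') (B' 1))) = t * t * q) :
    C' (B' 1) = q := by
  set g : ℂ → ℂ := fun t => C' (Ring.inverse (1 - t • A') (B' 1)) with hgdef
  have hg : ContinuousAt g 0 := by
    have h1 : ContinuousAt (fun t : ℂ => 1 - t • A') 0 := by fun_prop
    have h2 : ContinuousAt (Ring.inverse : (𝒳 →L[ℂ] 𝒳) → _) (1 : 𝒳 →L[ℂ] 𝒳) := by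
      simpa using NormedRing.inverse_continuousAt (1 : (𝒳 →L[ℂ] 𝒳)ˣ)
    have h3 : ContinuousAt (fun t : ℂ => Ring.inverse (1 - t • A')) 0 := by
      have he : (1 : 𝒳 →L[ℂ] 𝒳) = 1 - (0:ℂ) • A' := by simp
      exact ContinuousAt.comp (he ▸ h2) h1
    exact (C'.continuous.continuousAt).comp
      (((ContinuousLinearMap.apply ℂ 𝒳 (B' 1)).continuous.continuousAt).comp h3)
  have hev : ∀ᶠ t in 𝓝[≠] (0:ℂ), ‖t‖ < 1 ∧ t ≠ 0 := by
    filter_upwards [self_mem_nhdsWithin,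
      eventually_nhdsWithin_of_eventually_nhds
        (eventually_nhds_iff.mpr ⟨Metric.ball 0 1, by
          intro y hy; simpa using hy, Metric.isOpen_ball, by simp⟩)] with t h1 h2
    exact ⟨h2, h1⟩
  have hd : d = 0 := by
    have hev' : ∀ᶠ t in 𝓝[≠] (0:ℂ), d = t * (q - g t) := by
      filter_upwards [hev] with t ⟨ht1, ht0⟩
      have := h t ht1
      field_simp at this ⊢
      have : t * d = t * (t * (q - g t)) := by simp only [hgdef]; linear_combination t * this
      exact mul_left_cancel₀ ht0 this
    have hlim : Filter.Tendsto (fun t : ℂ => t * (q - g t)) (𝓝[≠] 0) (𝓝 (0 * (q - g 0))) := by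
      apply Filter.Tendsto.mono_left _ nhdsWithin_le_nhds
      exact (continuousAt_id.mul (continuousAt_const.sub hg))
    have : Filter.Tendsto (fun _ : ℂ => d) (𝓝[≠] (0:ℂ)) (𝓝 (0 * (q - g 0))) :=
      hlim.congr' (hev'.mono fun t ht => ht.symm)
    simpa using tendsto_nhds_unique tendsto_const_nhds this
  have hq : ∀ᶠ t in 𝓝[≠] (0:ℂ), g t = q := by
    filter_upwards [hev] with t ⟨ht1, ht0⟩
    have := h t ht1
    rw [hd, mul_zero, zero_add] at this
    exact mul_left_cancel₀ (mul_ne_zero ht0 ht0) this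
  have hgq : g 0 = q := by
    have h1 : Filter.Tendsto g (𝓝[≠] (0:ℂ)) (𝓝 (g 0)) :=
      hg.continuousWithinAt
    have h2 : Filter.Tendsto g (𝓝[≠] (0:ℂ)) (𝓝 q) :=
      Filter.Tendsto.congr' (hq.mono fun t ht => ht.symm) tendsto_const_nhds
    exact tendsto_nhds_unique h1 h2
  rw [← hgq]
  simp [hgdef]

end Aux

set_option maxHeartbeats 1000000 in
open ContinuousLinearMap in
/-- The Kaijser–Varopoulos polynomial `p` has no dissipative 3D scattering realization
with scalar input and output: no dissipative system's transfer function agrees with `p`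
on the open polydisk. -/
theorem stmt_13 {𝒳 : Type*} [NormedAddCommGroup 𝒳] [InnerProductSpace ℂ 𝒳]
    [CompleteSpace 𝒳]
    (A : Fin 3 → 𝒳 →L[ℂ] 𝒳) (B : Fin 3 → ℂ →L[ℂ] 𝒳)
    (C : Fin 3 → 𝒳 →L[ℂ] ℂ) (D : Fin 3 → ℂ →L[ℂ] ℂ)
    (hdiss : ∀ ζ : Fin 3 → ℂ, (∀ k, ‖ζ k‖ = 1) →
      ‖blockOp (∑ k, ζ k • A k) (∑ k, ζ k • B k)
        (∑ k, ζ k • C k) (∑ k, ζ k • D k)‖ ≤ 1) :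
    ¬ (∀ z : Fin 3 → ℂ, (∀ k, ‖z k‖ < 1) →
      ((∑ k, z k • D k) +
        (∑ k, z k • C k) ∘L Ring.inverse (1 - ∑ k, z k • A k) ∘L
          (∑ k, z k • B k)) 1 = pKV z) := by
  intro hreal
  -- Step A: quadratic coefficient extraction
  have hquad : ∀ w : Fin 3 → ℂ, (∀ k, ‖w k‖ ≤ 1) →
      (∑ k, w k • C k) ((∑ k, w k • B k) 1) = pKV w := by
    intro w hw
    apply coeff_extract (∑ k, w k • A k) (∑ k, w k • B k) (∑ k, w k • C k)
      (pKV w) ((∑ k, w k • D k) 1)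
    intro t ht
    have hz : ∀ k, ‖(fun k => t * w k) k‖ < 1 := by
      intro k
      calc ‖t * w k‖ = ‖t‖ * ‖w k‖ := norm_mul _ _
      _ ≤ ‖t‖ * 1 := by gcongr ?_ * ?_ <;> first | exact le_rfl | exact hw k
      _ < 1 := by simpa using ht
    have key := hreal (fun k => t * w k) hz
    have hD : (∑ k, (t * w k) • D k) = t • ∑ k, w k • D k := by
      simp_rw [mul_smul]; rw [Finset.smul_sum]
    have hA : (∑ k, (t * w k) • A k) = t • ∑ k, w k • A k := by
      simp_rw [mul_smul]; rw [Finset.smul_sum]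
    have hB : (∑ k, (t * w k) • B k) = t • ∑ k, w k • B k := by
      simp_rw [mul_smul]; rw [Finset.smul_sum]
    have hC : (∑ k, (t * w k) • C k) = t • ∑ k, w k • C k := by
      simp_rw [mul_smul]; rw [Finset.smul_sum]
    rw [hD, hA, hB, hC] at key
    have hp : pKV (fun k => t * w k) = t * t * pKV w := by
      simp only [pKV]; ring
    rw [hp] at key
    rw [← key]
    simp only [ContinuousLinearMap.add_apply, ContinuousLinearMap.comp_apply,
      ContinuousLinearMap.smul_apply, map_smul, smul_eq_mul]
    ring
  -- concrete coefficient identities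
  have hone : ∀ k, ‖(![1,0,0] : Fin 3 → ℂ) k‖ ≤ 1 := by intro k; fin_cases k <;> norm_num
  have q0 := hquad ![1,0,0] (by intro k; fin_cases k <;> norm_num)
  have q1 := hquad ![0,1,0] (by intro k; fin_cases k <;> norm_num)
  have q2 := hquad ![0,0,1] (by intro k; fin_cases k <;> norm_num)
  have q01 := hquad ![1,1,0] (by intro k; fin_cases k <;> norm_num)
  have q02 := hquad ![1,0,1] (by intro k; fin_cases k <;> norm_num)
  have q12 := hquad ![0,1,1] (by intro k; fin_cases k <;> norm_num)
  simp only [Fin.sum_univ_three, Matrix.cons_val_zero, Matrix.cons_val_one, Matrix.head_cons,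
    Matrix.cons_val_two, Matrix.tail_cons, one_smul, zero_smul, add_zero, zero_add,
    ContinuousLinearMap.add_apply, map_add, pKV] at q0 q1 q2 q01 q02 q12
  norm_num at q0 q1 q2 q01 q02 q12
  -- column bound
  have hb : ∀ ζ : Fin 3 → ℂ, (∀ k, ‖ζ k‖ = 1) →
      ‖ζ 0 • B 0 1 + ζ 1 • B 1 1 + ζ 2 • B 2 1‖ ≤ 1 := by
    intro ζ hζ
    have h := blockOp_bound _ _ _ _ (hdiss ζ hζ) 0 1
    simp only [Fin.sum_univ_three, ContinuousLinearMap.add_apply,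
      ContinuousLinearMap.smul_apply, map_zero, smul_zero, zero_add, add_zero,
      norm_zero, norm_one] at h
    nlinarith [norm_nonneg (ζ 0 • B 0 1 + ζ 1 • B 1 1 + ζ 2 • B 2 1),
      norm_nonneg (ζ 0 • D 0 1 + ζ 1 • D 1 1 + ζ 2 • D 2 1), h]
  -- row bound
  have hrow : ∀ σ : Fin 3 → ℂ, (∀ k, ‖σ k‖ = 1) → ∀ x : 𝒳,
      ‖σ 0 • C 0 x + σ 1 • C 1 x + σ 2 • C 2 x‖ ≤ ‖x‖ := by
    intro σ hσ x
    have h := blockOp_bound _ _ _ _ (hdiss σ hσ) x 0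
    simp only [Fin.sum_univ_three, ContinuousLinearMap.add_apply,
      ContinuousLinearMap.smul_apply, map_zero, smul_zero, zero_add, add_zero,
      norm_zero] at h
    nlinarith [norm_nonneg (σ 0 • C 0 x + σ 1 • C 1 x + σ 2 • C 2 x),
      norm_nonneg (σ 0 • A 0 x + σ 1 • A 1 x + σ 2 • A 2 x), norm_nonneg x, h]
  set u := B 0 1 with hu
  set v := B 1 1 with hv
  set w := B 2 1 with hw
  have hsign : ∀ a b c : ℂ, ‖a‖ = 1 → ‖b‖ = 1 → ‖c‖ = 1 →
      ∀ k, ‖(![a,b,c] : Fin 3 → ℂ) k‖ = 1 := by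
    intro a b c ha hb hc k; fin_cases k <;> assumption
  have hn1 : ‖(1:ℂ)‖ = 1 := norm_one
  have hnm1 : ‖(-1:ℂ)‖ = 1 := by simp
  have e1 := hb ![1,1,1] (hsign _ _ _ hn1 hn1 hn1)
  have e2 := hb ![1,1,-1] (hsign _ _ _ hn1 hn1 hnm1)
  have e3 := hb ![1,-1,1] (hsign _ _ _ hn1 hnm1 hn1)
  have e4 := hb ![1,-1,-1] (hsign _ _ _ hn1 hnm1 hnm1)
  simp only [Matrix.cons_val_zero, Matrix.cons_val_one, Matrix.head_cons,
    Matrix.cons_val_two, Matrix.tail_cons, one_smul, neg_smul, ← sub_eq_add_neg] at e1 e2 e3 e4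
  -- parallelogram law
  have p1 := parallelogram_law_with_norm ℂ (u+v) w
  have p2 := parallelogram_law_with_norm ℂ (u-v) w
  have p3 := parallelogram_law_with_norm ℂ u v
  have e1' : ‖u + v + w‖ * ‖u + v + w‖ ≤ 1 := mul_le_one₀ e1 (norm_nonneg _) e1
  have e2' : ‖u + v - w‖ * ‖u + v - w‖ ≤ 1 := mul_le_one₀ e2 (norm_nonneg _) e2
  have e3' : ‖u - v + w‖ * ‖u - v + w‖ ≤ 1 := mul_le_one₀ e3 (norm_nonneg _) e3
  have e4' : ‖u - v - w‖ * ‖u - v - w‖ ≤ 1 := mul_le_one₀ e4 (norm_nonneg _) e4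
  have hsumsq : ‖u‖*‖u‖ + ‖v‖*‖v‖ + ‖w‖*‖w‖ ≤ 1 := by linarith
  -- rows at the sign matrix
  have hr0 := hrow ![1,-1,-1] (hsign _ _ _ hn1 hnm1 hnm1) u
  have hr1 := hrow ![-1,1,-1] (hsign _ _ _ hnm1 hn1 hnm1) v
  have hr2 := hrow ![-1,-1,1] (hsign _ _ _ hnm1 hnm1 hn1) w
  simp only [Matrix.cons_val_zero, Matrix.cons_val_one, Matrix.head_cons,
    Matrix.cons_val_two, Matrix.tail_cons, one_smul, neg_smul, ← sub_eq_add_neg] at hr0 hr1 hr2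
  have hkey : (C 0 u - C 1 u - C 2 u) + (-(C 0 v) + C 1 v - C 2 v)
      + (-(C 0 w) - C 1 w + C 2 w) = 9/5 := by
    linear_combination 3*q0 + 3*q1 + 3*q2 - q01 - q02 - q12
  have h95 : (9/5 : ℝ) ≤ ‖u‖ + ‖v‖ + ‖w‖ := by
    have hnorm95 : ‖((9:ℂ)/5)‖ = 9/5 := by
      rw [show ((9:ℂ)/5) = (((9:ℝ)/5 : ℝ) : ℂ) by norm_num, Complex.norm_real]
      norm_num
    calc (9/5 : ℝ) = ‖((C 0 u - C 1 u - C 2 u) + (-(C 0 v) + C 1 v - C 2 v)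
        + (-(C 0 w) - C 1 w + C 2 w))‖ := by rw [hkey, hnorm95]
    _ ≤ ‖C 0 u - C 1 u - C 2 u‖ + ‖-(C 0 v) + C 1 v - C 2 v‖
        + ‖-(C 0 w) - C 1 w + C 2 w‖ := norm_add₃_le
    _ ≤ ‖u‖ + ‖v‖ + ‖w‖ := by exact add_le_add (add_le_add hr0 hr1) hr2
  nlinarith [h95, hsumsq, norm_nonneg u, norm_nonneg v, norm_nonneg w,
    sq_nonneg (‖u‖ - ‖v‖), sq_nonneg (‖u‖ - ‖w‖), sq_nonneg (‖v‖ - ‖w‖)]
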